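/- arXiv:2604.13007 — 2 statements merged into one kernel-verified Lean document; each statement's English description precedes it below -/
import Mathlib

section
/- Suppose T > 0, u_max > 0, β := v_max - v0 > 0, x := u_max·T, and 3(L - v0·T) ≥ 2βT. If additionally x² - 2u_max(L - v0·T) ≥ 0 and x ≥ 2β, then the terminal speed of the bang-affine profile v_i(T) = v0 + x - (√3/2)·√(x² - 2u_max(L - v0·T)) satisfies v_i(T) ≥ v_max. -/
theorem stmt_6 (v0 vmax L T umax : ℝ)
    (hT : T > 0) (humax : umax > 0)
    (β x : ℝ) (hβdef : β = vmax - v0) (hβ : β > 0) (hxdef : x = umax * T)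
    (h1 : 3 * (L - v0 * T) ≥ 2 * β * T)
    (h2 : x ^ 2 - 2 * umax * (L - v0 * T) ≥ 0)
    (h3 : x ≥ 2 * β) :
    v0 + x - (Real.sqrt 3 / 2) * Real.sqrt (x ^ 2 - 2 * umax * (L - v0 * T)) ≥ vmax := by
  set A := x ^ 2 - 2 * umax * (L - v0 * T) with hA
  have hAle : 3 * A ≤ (2 * (x - β)) ^ 2 := by
    have := mul_le_mul_of_nonneg_left h1 humax.le
    nlinarith [this, sq_nonneg (x - 2 * β)]
  have hkey : Real.sqrt 3 * Real.sqrt A ≤ 2 * (x - β) := by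
    rw [← Real.sqrt_mul (by norm_num) A]
    calc Real.sqrt (3 * A) ≤ Real.sqrt ((2 * (x - β)) ^ 2) := Real.sqrt_le_sqrt hAle
      _ = 2 * (x - β) := Real.sqrt_sq (by linarith)
  nlinarith [hkey]
end

section
/- Consider the B-A-C trajectory: p(0) = 0, v(0) = v0, u = u_max on [0, τ_c], affine u from u_max to 0 on [τ_c, τ_s] with τ_c + τ_s = 2β/u_max where β = v_max - v0. Then the position at the state-constraint junction is p(τ_s) = (4β/3)τ_s - 2β²/(3u_max) - (u_max/6)τ_s² + v0·τ_s. -/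
/-!
On each of the two phases the control is affine in time, so velocity and position are the
quadratic and cubic Taylor polynomials of the motion (uniqueness of antiderivatives on an
interval). Chaining the constant-acceleration phase `[0, τc]` into the ramp-down phase
`[τc, τs]` gives `p τs = v0 τs + umax (τc² / 2 + τc (τs - τc) + (τs - τc)² / 3)`, and
eliminating `τc` through `umax (τc + τs) = 2β` yields the stated formula.
-/

open Set

theorem eqOn_Icc_of_hasDerivAt_eq {f g f' : ℝ → ℝ} {a b : ℝ}
    (hf : ∀ t ∈ Icc a b, HasDerivAt f (f' t) t) (hg : ∀ t ∈ Icc a b, HasDerivAt g (f' t) t)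
    (ha : f a = g a) : ∀ t ∈ Icc a b, f t = g t :=
  eq_of_has_deriv_right_eq
    (fun t ht => (hf t (Ico_subset_Icc_self ht)).hasDerivWithinAt)
    (fun t ht => (hg t (Ico_subset_Icc_self ht)).hasDerivWithinAt)
    (fun t ht => (hf t ht).continuousAt.continuousWithinAt)
    (fun t ht => (hg t ht).continuousAt.continuousWithinAt) ha

section AffineAcceleration

variable {u v p : ℝ → ℝ} {a c₀ c₁ : ℝ}

theorem velocity_eq_of_affine_accel {b : ℝ} (hu : ∀ t ∈ Icc a b, u t = c₀ + c₁ * (t - a))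
    (hv : ∀ t ∈ Icc a b, HasDerivAt v (u t) t) :
    ∀ t ∈ Icc a b, v t = v a + c₀ * (t - a) + c₁ * (t - a) ^ 2 / 2 := by
  refine eqOn_Icc_of_hasDerivAt_eq hv (fun t ht => ?_) (by ring)
  have hlin := (hasDerivAt_id' t).sub_const a
  refine (((hlin.const_mul c₀).const_add (v a)).add
    ((hlin.pow 2).const_mul c₁ |>.div_const 2)).congr_deriv ?_
  rw [hu t ht]
  ring

theorem position_eq_of_affine_accel {b : ℝ} (hu : ∀ t ∈ Icc a b, u t = c₀ + c₁ * (t - a))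
    (hv : ∀ t ∈ Icc a b, HasDerivAt v (u t) t) (hp : ∀ t ∈ Icc a b, HasDerivAt p (v t) t) :
    ∀ t ∈ Icc a b,
      p t = p a + v a * (t - a) + c₀ * (t - a) ^ 2 / 2 + c₁ * (t - a) ^ 3 / 6 := by
  refine eqOn_Icc_of_hasDerivAt_eq hp (fun t ht => ?_) (by ring)
  have hlin := (hasDerivAt_id' t).sub_const a
  refine ((((hlin.const_mul (v a)).const_add (p a)).add
    ((hlin.pow 2).const_mul c₀ |>.div_const 2)).add
      ((hlin.pow 3).const_mul c₁ |>.div_const 6)).congr_deriv ?_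
  rw [velocity_eq_of_affine_accel hu hv t ht]
  ring

end AffineAcceleration

theorem stmt_16_general (v0 umax τc τs : ℝ)
    (humax : umax > 0)
    (β : ℝ)
    (hτc : 0 < τc) (hτ : τc < τs)
    (hsum : τc + τs = 2 * β / umax)
    (u v p : ℝ → ℝ)
    (hu1 : ∀ t ∈ Set.Icc 0 τc, u t = umax)
    (hu2 : ∀ t ∈ Set.Icc τc τs, u t = umax * (τs - t) / (τs - τc))
    (hp0 : p 0 = 0) (hv0 : v 0 = v0)
    (hp' : ∀ t ∈ Set.Icc (0:ℝ) τs, HasDerivAt p (v t) t)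
    (hv' : ∀ t ∈ Set.Icc (0:ℝ) τs, HasDerivAt v (u t) t) :
    p τs = (4 * β / 3) * τs - 2 * β ^ 2 / (3 * umax) - (umax / 6) * τs ^ 2 + v0 * τs := by
  have hsub₁ : Icc 0 τc ⊆ Icc 0 τs := Icc_subset_Icc le_rfl hτ.le
  have hsub₂ : Icc τc τs ⊆ Icc 0 τs := Icc_subset_Icc hτc.le le_rfl
  have hu₁ : ∀ t ∈ Icc 0 τc, u t = umax + 0 * (t - 0) := fun t ht => by simp [hu1 t ht]
  have hu₂ : ∀ t ∈ Icc τc τs, u t = umax + -umax / (τs - τc) * (t - τc) := fun t ht => by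
    rw [hu2 t ht]
    field_simp [(sub_pos.2 hτ).ne']
    ring
  have hτc_mem : τc ∈ Icc 0 τc := ⟨hτc.le, le_rfl⟩
  have hv_τc := velocity_eq_of_affine_accel hu₁ (fun t ht => hv' t (hsub₁ ht)) τc hτc_mem
  have hp_τc := position_eq_of_affine_accel hu₁ (fun t ht => hv' t (hsub₁ ht))
    (fun t ht => hp' t (hsub₁ ht)) τc hτc_mem
  have hp_τs := position_eq_of_affine_accel hu₂ (fun t ht => hv' t (hsub₂ ht))
    (fun t ht => hp' t (hsub₂ ht)) τs ⟨hτ.le, le_rfl⟩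
  have hβ_eq : β = umax * (τc + τs) / 2 := by
    rw [hsum]
    field_simp [humax.ne']
  rw [hp_τs, hp_τc, hv_τc, hp0, hv0, hβ_eq]
  field_simp [(sub_pos.2 hτ).ne']
  ring

theorem stmt_16 (v0 vmax umax τc τs : ℝ)
    (humax : umax > 0)
    (β : ℝ) (hβdef : β = vmax - v0) (hβ : β > 0)
    (hτc : 0 < τc) (hτ : τc < τs)
    (hsum : τc + τs = 2 * β / umax)
    (u v p : ℝ → ℝ)
    (hu1 : ∀ t ∈ Set.Icc 0 τc, u t = umax)
    (hu2 : ∀ t ∈ Set.Icc τc τs, u t = umax * (τs - t) / (τs - τc))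
    (hp0 : p 0 = 0) (hv0 : v 0 = v0)
    (hp' : ∀ t ∈ Set.Icc (0:ℝ) τs, HasDerivAt p (v t) t)
    (hv' : ∀ t ∈ Set.Icc (0:ℝ) τs, HasDerivAt v (u t) t) :
    p τs = (4 * β / 3) * τs - 2 * β ^ 2 / (3 * umax) - (umax / 6) * τs ^ 2 + v0 * τs :=
  stmt_16_general v0 umax τc τs humax β hτc hτ hsum u v p hu1 hu2 hp0 hv0 hp' hv'
end
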